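/- arXiv:2301.08994 — 11 statements merged into one kernel-verified Lean document; each statement's English description precedes it below -/
import Mathlib

section
/- Suppose 0 < P(A) < 1, P(C) > 0 and P(Aᶜ ∩ C) > 0. If RB(A|C) > 1 then BF(A|C) ≥ RB(A|C), and if RB(A|C) < 1 then BF(A|C) ≤ RB(A|C). -/
open MeasureTheory

/-- Conditional probability `P(A|C) = P(A ∩ C)/P(C)` as a real number. -/
noncomputable def condProb {Ω : Type*} [MeasurableSpace Ω] (P : Measure Ω) (A C : Set Ω) : ℝ :=
  (P (A ∩ C)).toReal / (P C).toReal

/-- The relative belief ratio `RB(A|C) = P(A|C)/P(A)`. -/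
noncomputable def relBelief {Ω : Type*} [MeasurableSpace Ω] (P : Measure Ω) (A C : Set Ω) : ℝ :=
  condProb P A C / (P A).toReal

/-- The Bayes factor in favor of `A` given `C`:
`BF(A|C) = (P(A|C)/P(Aᶜ|C)) / (P(A)/P(Aᶜ))`. -/
noncomputable def bayesFactor {Ω : Type*} [MeasurableSpace Ω] (P : Measure Ω) (A C : Set Ω) : ℝ :=
  (condProb P A C / condProb P Aᶜ C) / ((P A).toReal / (P Aᶜ).toReal)

/-- If there is evidence in favor of `A` then `BF(A|C) ≥ RB(A|C)`, and if there is
evidence against `A` then `BF(A|C) ≤ RB(A|C)`. -/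
theorem bayesFactor_vs_relBelief {Ω : Type*} [MeasurableSpace Ω]
    (P : Measure Ω) [IsProbabilityMeasure P]
    (A C : Set Ω) (hA : MeasurableSet A) (hC : MeasurableSet C)
    (hA0 : 0 < P A) (hA1 : P A < 1) (hC0 : 0 < P C) (hAcC : 0 < P (Aᶜ ∩ C)) :
    (relBelief P A C > 1 → bayesFactor P A C ≥ relBelief P A C) ∧
    (relBelief P A C < 1 → bayesFactor P A C ≤ relBelief P A C) := by
  set a := (P (A ∩ C)).toReal with ha_def
  set b := (P (Aᶜ ∩ C)).toReal with hb_def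
  set c := (P C).toReal with hc_def
  set p := (P A).toReal with hp_def
  set q := (P Aᶜ).toReal with hq_def
  have hsplit : P (A ∩ C) + P (Aᶜ ∩ C) = P C := by
    have := measure_inter_add_diff (μ := P) C hA
    rw [Set.diff_eq, Set.inter_comm C A, Set.inter_comm C Aᶜ] at this
    exact this
  have habc : a + b = c := by
    rw [ha_def, hb_def, hc_def, ← ENNReal.toReal_add (measure_ne_top _ _) (measure_ne_top _ _),
      hsplit]
  have hpq : p + q = 1 := by
    rw [hp_def, hq_def, ← ENNReal.toReal_add (measure_ne_top _ _) (measure_ne_top _ _),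
      measure_add_measure_compl hA]
    simp
  have ha0 : 0 ≤ a := ENNReal.toReal_nonneg
  have hb0 : 0 < b := ENNReal.toReal_pos hAcC.ne' (measure_ne_top _ _)
  have hc0 : 0 < c := ENNReal.toReal_pos hC0.ne' (measure_ne_top _ _)
  have hp0 : 0 < p := ENNReal.toReal_pos hA0.ne' (measure_ne_top _ _)
  have hp1 : p < 1 := by
    rw [hp_def, show (1:ℝ) = (1:ENNReal).toReal by simp]
    exact ENNReal.toReal_lt_toReal (measure_ne_top _ _) (by simp) |>.mpr hA1
  have hq0 : 0 < q := by linarith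
  have hRB : relBelief P A C = a / c / p := rfl
  have hBF : bayesFactor P A C = ((a / c) / (b / c)) / (p / q) := rfl
  have e1 : ((a / c) / (b / c)) / (p / q) = a * q / (b * p) := by
    field_simp
  have e2 : a / c / p = a / (c * p) := by rw [div_div]
  have hint : 0 ≤ a * p := mul_nonneg ha0 hp0.le
  constructor
  · intro h
    rw [hRB, gt_iff_lt, lt_div_iff₀ hp0, one_mul, lt_div_iff₀ hc0] at h
    rw [ge_iff_le, hRB, hBF, e1, e2, div_le_div_iff₀ (by positivity) (by positivity),
      show b = c - a by linarith, show q = 1 - p by linarith]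
    nlinarith [mul_nonneg hint (sub_nonneg.mpr h.le)]
  · intro h
    rw [hRB, div_lt_iff₀ hp0, one_mul, div_lt_iff₀ hc0] at h
    rw [hRB, hBF, e1, e2, div_le_div_iff₀ (by positivity) (by positivity),
      show b = c - a by linarith, show q = 1 - p by linarith]
    nlinarith [mul_nonneg hint (sub_nonneg.mpr h.le)]
end

section
/- The relative belief ratio of H based on the mixture prior satisfies ν_x(H)/ν(H) = m₀/(p·m₀ + (1−p)·m); unlike the Bayes factor based on the mixture prior, this quantity does depend on the mixture weight p (it differs for different p whenever m₀ ≠ m). -/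
open MeasureTheory

/-- For the mixture prior `ν = p·μ₀ + (1−p)·μ` and corresponding posterior `ν_x`:
the relative belief ratio of `H` equals `m₀/(p·m₀ + (1−p)·m)`; unlike the Bayes factor,
it depends on the mixture weight `p`: for different weights `p ≠ q` it differs
whenever `m₀ ≠ m`. -/
theorem mixture_prior_relative_belief {Θ : Type*} [MeasurableSpace Θ]
    (μ μ₀ : Measure Θ) [IsProbabilityMeasure μ] [IsProbabilityMeasure μ₀]
    (H : Set Θ) (hH : MeasurableSet H) (hμH : μ H = 0) (hμ₀H : μ₀ H = 1)
    (f : Θ → ℝ) (hfmeas : Measurable f) (hf0 : 0 ≤ f)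
    (hint₀ : Integrable f μ₀) (hint : Integrable f μ)
    (m₀ m : ℝ) (hm₀ : m₀ = ∫ θ, f θ ∂μ₀) (hm : m = ∫ θ, f θ ∂μ)
    (hm₀pos : 0 < m₀) (hmpos : 0 < m)
    (p : ℝ) (hp0 : 0 < p) (hp1 : p < 1)
    (ν : Measure Θ) (hν : ν = ENNReal.ofReal p • μ₀ + ENNReal.ofReal (1 - p) • μ)
    (νx : Measure Θ)
    (hνx : νx = ν.withDensity (fun θ => ENNReal.ofReal (f θ / (p * m₀ + (1 - p) * m)))) :
    (νx H).toReal / (ν H).toReal = m₀ / (p * m₀ + (1 - p) * m) ∧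
    (∀ q : ℝ, 0 < q → q < 1 → p ≠ q → m₀ ≠ m →
      m₀ / (p * m₀ + (1 - p) * m) ≠ m₀ / (q * m₀ + (1 - q) * m)) := by
  set c : ℝ := p * m₀ + (1 - p) * m with hc
  have hcpos : 0 < c := by
    have := mul_pos hp0 hm₀pos
    have := mul_pos (by linarith : (0:ℝ) < 1 - p) hmpos
    linarith
  constructor
  · -- ν H = ofReal p
    have hνH : ν H = ENNReal.ofReal p := by
      rw [hν]
      simp [Measure.add_apply, hμH, hμ₀H]
    -- μ₀ Hᶜ = 0
    have hcompl : μ₀ Hᶜ = 0 := by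
      have := measure_compl hH (measure_ne_top μ₀ H)
      rw [hμ₀H] at this
      simp [this]
    have hrestr : μ₀.restrict H = μ₀ := Measure.restrict_eq_self_of_ae_mem
      (ae_iff.mpr (by exact hcompl))
    -- lintegral computation
    have hgmeas : Measurable fun θ => ENNReal.ofReal (f θ / c) :=
      (hfmeas.div_const c).ennreal_ofReal
    have hint₀' : Integrable (fun θ => f θ / c) μ₀ := hint₀.div_const c
    have hlint : ∫⁻ θ, ENNReal.ofReal (f θ / c) ∂μ₀ = ENNReal.ofReal (m₀ / c) := by
      rw [← ofReal_integral_eq_lintegral_ofReal hint₀'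
        (Filter.Eventually.of_forall fun θ => div_nonneg (hf0 θ) hcpos.le)]
      congr 1
      rw [integral_div, ← hm₀]
    have hνxH : νx H = ENNReal.ofReal p * ENNReal.ofReal (m₀ / c) := by
      rw [hνx, withDensity_apply _ hH, hν]
      rw [Measure.restrict_add, Measure.restrict_smul, Measure.restrict_smul]
      rw [lintegral_add_measure, lintegral_smul_measure, lintegral_smul_measure]
      rw [hrestr, hlint]
      have : ∫⁻ θ, ENNReal.ofReal (f θ / c) ∂(μ.restrict H) = 0 := by
        rw [Measure.restrict_eq_zero.mpr hμH, lintegral_zero_measure]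
      rw [this, smul_zero, add_zero, smul_eq_mul]
    rw [hνxH, hνH]
    rw [ENNReal.toReal_mul, ENNReal.toReal_ofReal hp0.le,
      ENNReal.toReal_ofReal (div_nonneg hm₀pos.le hcpos.le)]
    field_simp
  · intro q hq0 hq1 hpq hne h
    set d : ℝ := q * m₀ + (1 - q) * m with hd
    have hdpos : 0 < d := by
      have := mul_pos hq0 hm₀pos
      have := mul_pos (by linarith : (0:ℝ) < 1 - q) hmpos
      linarith
    rw [div_eq_div_iff hcpos.ne' hdpos.ne'] at h
    have hcd : c = d := by
      have := mul_left_cancel₀ hm₀pos.ne' (by linarith [h] : m₀ * d = m₀ * c)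
      linarith
    have hpq' : p - q ≠ 0 := sub_ne_zero.mpr hpq
    apply hne
    have : (p - q) * (m₀ - m) = 0 := by
      rw [hc, hd] at hcd; ring_nf; ring_nf at hcd; linarith
    rcases mul_eq_zero.mp this with h' | h'
    · exact absurd h' hpq'
    · linarith [sub_eq_zero.mp h']
end

section
/- The function g(ε) = log( f / m_ε ), where m_ε = ((1−ε)·m + ε·c·w)/(1−ε + ε·c), has derivative at ε = 0 equal to c·(1 − w/m). (Derivative of the log relative belief ratio under linear contamination of the prior; in particular this derivative does not depend on the parameter value θ at which the relative belief ratio is evaluated.) -/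
/-- Derivative at `ε = 0` of the log relative belief ratio under linear contamination of
the prior: with `m_ε = ((1−ε)m + εcw)/(1−ε+εc)`, the function `ε ↦ log(f/m_ε)` has
derivative `c(1 − w/m)` at `0`; in particular the derivative does not depend on the
parameter value at which the relative belief ratio is evaluated. -/
theorem deriv_log_relBelief_linear_contamination (f m w c : ℝ)
    (hf : 0 < f) (hm : 0 < m) (hw : 0 ≤ w) (hc : 0 < c) :
    HasDerivAt (fun ε : ℝ => Real.log (f / (((1 - ε) * m + ε * c * w) / (1 - ε + ε * c))))
      (c * (1 - w / m)) 0 := by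
  have hN : HasDerivAt (fun ε : ℝ => (1 - ε) * m + ε * c * w) (c * w - m) 0 := by
    have h1 : HasDerivAt (fun ε : ℝ => (1 - ε) * m) (-m) 0 := by
      simpa using (((hasDerivAt_id (0 : ℝ)).const_sub 1).mul_const m)
    have h2 : HasDerivAt (fun ε : ℝ => ε * c * w) (c * w) 0 := by
      simpa using (((hasDerivAt_id (0 : ℝ)).mul_const c).mul_const w)
    exact (h1.add h2).congr_deriv (by ring)
  have hD : HasDerivAt (fun ε : ℝ => 1 - ε + ε * c) (c - 1) 0 := by
    have h1 : HasDerivAt (fun ε : ℝ => 1 - ε) (-1 : ℝ) 0 := by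
      simpa using ((hasDerivAt_id (0 : ℝ)).const_sub 1)
    have h2 : HasDerivAt (fun ε : ℝ => ε * c) c 0 := by
      simpa using ((hasDerivAt_id (0 : ℝ)).mul_const c)
    exact (h1.add h2).congr_deriv (by ring)
  have hN0 : ((1 - (0:ℝ)) * m + 0 * c * w) = m := by ring
  have hD0 : (1 - (0:ℝ) + 0 * c) = 1 := by ring
  have hlogN : HasDerivAt (fun ε : ℝ => Real.log ((1 - ε) * m + ε * c * w))
      ((c * w - m) / m) 0 := by
    have := hN.log (by rw [hN0]; exact hm.ne')
    simpa [hN0] using this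
  have hlogD : HasDerivAt (fun ε : ℝ => Real.log (1 - ε + ε * c)) (c - 1) 0 := by
    have := hD.log (by rw [hD0]; norm_num)
    simpa [hD0] using this
  have key : HasDerivAt (fun ε : ℝ =>
      Real.log f - Real.log ((1 - ε) * m + ε * c * w) + Real.log (1 - ε + ε * c))
      (c * (1 - w / m)) 0 := by
    have h := (hlogN.neg.add hlogD).const_add (Real.log f)
    have : -((c * w - m) / m) + (c - 1) = c * (1 - w / m) := by
      field_simp
      ring
    rw [this] at h
    simpa [sub_eq_add_neg, add_assoc] using h
  -- the two functions agree on a neighborhood of 0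
  have hNcont : ContinuousAt (fun ε : ℝ => (1 - ε) * m + ε * c * w) 0 := hN.continuousAt
  have hDcont : ContinuousAt (fun ε : ℝ => 1 - ε + ε * c) 0 := hD.continuousAt
  have hNpos : ∀ᶠ ε in nhds (0:ℝ), 0 < (1 - ε) * m + ε * c * w :=
    continuousAt_const.eventually_lt hNcont (by simpa [hN0] using hm)
  have hDpos : ∀ᶠ ε in nhds (0:ℝ), 0 < 1 - ε + ε * c :=
    continuousAt_const.eventually_lt hDcont (by simpa [hD0] using (one_pos))
  have heq : (fun ε : ℝ =>
      Real.log f - Real.log ((1 - ε) * m + ε * c * w) + Real.log (1 - ε + ε * c)) =ᶠ[nhds (0:ℝ)]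
      (fun ε : ℝ => Real.log (f / (((1 - ε) * m + ε * c * w) / (1 - ε + ε * c)))) := by
    filter_upwards [hNpos, hDpos] with ε hNp hDp
    rw [Real.log_div hf.ne' (div_pos hNp hDp).ne', Real.log_div hNp.ne' hDp.ne']
    ring
  exact key.congr_of_eventuallyEq heq.symm
end

section
/- Let p, R : ℝ → ℝ be functions with p(0) = a, R(0) = ρ, having derivatives p′ and R′ at 0 respectively, where 0 < a < 1, ρ > 0 and a·ρ < 1, and set B = (1−a)·ρ/(1−a·ρ). Then the function ε ↦ log( (1 − p(ε))·R(ε) / (1 − p(ε)·R(ε)) ) has derivative at 0 equal to (R′/ρ)·(1 + (a/(1−a))·B) − (p′/(1−a))·(1 − B). (The general logarithmic-derivative formula for a Bayes factor BF_ε = (1−π_ε)RB_ε/(1−π_ε RB_ε) under perturbation of the prior.) -/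
/-- General logarithmic-derivative formula for a Bayes factor
`BF_ε = (1 − π_ε)·RB_ε/(1 − π_ε·RB_ε)` under perturbation of the prior. -/
theorem deriv_log_bayesFactor_general (p R : ℝ → ℝ) (a ρ p' R' : ℝ)
    (hp0 : p 0 = a) (hR0 : R 0 = ρ)
    (hp : HasDerivAt p p' 0) (hR : HasDerivAt R R' 0)
    (ha0 : 0 < a) (ha1 : a < 1) (hρ : 0 < ρ) (haρ : a * ρ < 1)
    (B : ℝ) (hB : B = (1 - a) * ρ / (1 - a * ρ)) :
    HasDerivAt (fun ε : ℝ => Real.log ((1 - p ε) * R ε / (1 - p ε * R ε)))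
      (R' / ρ * (1 + a / (1 - a) * B) - p' / (1 - a) * (1 - B)) 0 := by
  have h1 : HasDerivAt (fun ε => 1 - p ε) (-p') 0 := by simpa using hp.const_sub (1:ℝ)
  have h2 : HasDerivAt (fun ε => 1 - p ε * R ε) (-(p' * R 0 + p 0 * R')) 0 :=
    by simpa using (hp.mul hR).const_sub (1:ℝ)
  have hv1 : (1 : ℝ) - p 0 ≠ 0 := by rw [hp0]; linarith
  have hv2 : R 0 ≠ 0 := by rw [hR0]; exact hρ.ne'
  have hv3 : (1 : ℝ) - p 0 * R 0 ≠ 0 := by rw [hp0, hR0]; linarith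
  have hlog : HasDerivAt
      (fun ε => Real.log (1 - p ε) + Real.log (R ε) - Real.log (1 - p ε * R ε))
      ((-p') / (1 - p 0) + R' / R 0 - (-(p' * R 0 + p 0 * R')) / (1 - p 0 * R 0)) 0 :=
    ((h1.log hv1).add (hR.log hv2)).sub (h2.log hv3)
  have heq : (fun ε : ℝ => Real.log ((1 - p ε) * R ε / (1 - p ε * R ε))) =ᶠ[nhds 0]
      (fun ε => Real.log (1 - p ε) + Real.log (R ε) - Real.log (1 - p ε * R ε)) := by
    have c1 : ∀ᶠ ε in nhds (0:ℝ), 0 < 1 - p ε :=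
      (h1.continuousAt).eventually_ne (by rw [hp0]; exact (by linarith : (0:ℝ) < 1 - a).ne')
        |>.mp <| ((h1.continuousAt.tendsto).eventually
          (eventually_gt_nhds (by rw [hp0]; linarith : (0:ℝ) < 1 - p 0))).mono fun x hx _ => hx
    have c2 : ∀ᶠ ε in nhds (0:ℝ), 0 < R ε :=
      (hR.continuousAt.tendsto).eventually (eventually_gt_nhds (by rw [hR0]; exact hρ))
    have c3 : ∀ᶠ ε in nhds (0:ℝ), 0 < 1 - p ε * R ε :=
      (h2.continuousAt.tendsto).eventually
        (eventually_gt_nhds (by rw [hp0, hR0]; linarith : (0:ℝ) < 1 - p 0 * R 0))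
    filter_upwards [c1, c2, c3] with ε h1' h2' h3'
    rw [Real.log_div (by positivity) h3'.ne', Real.log_mul h1'.ne' h2'.ne']
  have hval : (-p') / (1 - p 0) + R' / R 0 - (-(p' * R 0 + p 0 * R')) / (1 - p 0 * R 0)
      = R' / ρ * (1 + a / (1 - a) * B) - p' / (1 - a) * (1 - B) := by
    rw [hp0, hR0, hB]
    have h1a : (1:ℝ) - a ≠ 0 := by linarith
    have h2a : (1:ℝ) - a * ρ ≠ 0 := by linarith
    field_simp
    ring
  exact hval ▸ hlog.congr_of_eventuallyEq heq
end

section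
/- Define p(ε) = ((1−ε)·a + ε·c·b)/(1−ε + ε·c), m_ε = ((1−ε)·m + ε·c·w)/(1−ε + ε·c), R(ε) = f/m_ε, and BF_ε = (1 − p(ε))·R(ε)/(1 − p(ε)·R(ε)). Then ε ↦ log BF_ε has derivative at 0 equal to c·(1 − w/m)·(1 + (a/(1−a))·B) + c·((a−b)/(1−a))·(1 − B), where B = (1−a)·(f/m)/(1−a·(f/m)). (Derivative of the log Bayes factor under linear contamination of the prior: it equals the logarithmic derivative c·(1 − w/m) of the relative belief ratio times (1 + (a/(1−a))·B), plus a term depending on θ.) -/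
/-- Derivative at `ε = 0` of the log Bayes factor under linear contamination of the
prior: it equals the logarithmic derivative `c(1 − w/m)` of the relative belief ratio
times `(1 + (a/(1−a))·B)`, plus a term depending on the parameter value. -/
theorem deriv_log_bayesFactor_linear_contamination (f m w c a b : ℝ)
    (hf : 0 < f) (hm : 0 < m) (hw : 0 ≤ w) (hc : 0 < c)
    (ha0 : 0 < a) (ha1 : a < 1) (hb : 0 ≤ b) (hafm : a * (f / m) < 1)
    (B : ℝ) (hB : B = (1 - a) * (f / m) / (1 - a * (f / m))) :
    HasDerivAt (fun ε : ℝ =>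
        Real.log ((1 - ((1 - ε) * a + ε * c * b) / (1 - ε + ε * c)) *
            (f / (((1 - ε) * m + ε * c * w) / (1 - ε + ε * c))) /
          (1 - (((1 - ε) * a + ε * c * b) / (1 - ε + ε * c)) *
            (f / (((1 - ε) * m + ε * c * w) / (1 - ε + ε * c))))))
      (c * (1 - w / m) * (1 + a / (1 - a) * B) + c * ((a - b) / (1 - a)) * (1 - B)) 0 := by
  have hmf : a * f < m := by
    have := (div_lt_one hm).mp (by rwa [← mul_div_assoc] at hafm)
    linarith
  have h1a : (0:ℝ) < 1 - a := by linarith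
  have hmaf : (0:ℝ) < m - a * f := by linarith
  set k1 : ℝ := c - 1 + a - c * b with hk1
  set k2 : ℝ := c * w - m + (a - c * b) * f with hk2
  -- the simplified function and its derivative
  have hd1 : HasDerivAt (fun ε : ℝ => ((1 - a) + ε * k1) * f) (k1 * f) 0 :=
    ((hasDerivAt_mul_const k1).const_add (1 - a)).mul_const f
  have hd2 : HasDerivAt (fun ε : ℝ => (m - a * f) + ε * k2) k2 0 :=
    (hasDerivAt_mul_const k2).const_add (m - a * f)
  have hne1 : ((1 - a) + (0:ℝ) * k1) * f ≠ 0 := by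
    have : ((1 - a) + (0:ℝ) * k1) * f = (1 - a) * f := by ring
    rw [this]; positivity
  have hne2 : (m - a * f) + (0:ℝ) * k2 ≠ 0 := by
    have : (m - a * f) + (0:ℝ) * k2 = m - a * f := by ring
    rw [this]; exact hmaf.ne'
  have hD : HasDerivAt
      (fun ε : ℝ => Real.log (((1 - a) + ε * k1) * f) - Real.log ((m - a * f) + ε * k2))
      (k1 * f / (((1 - a) + (0:ℝ) * k1) * f) - k2 / ((m - a * f) + (0:ℝ) * k2)) 0 :=
    (hd1.log hne1).sub (hd2.log hne2)
  have hval : k1 * f / (((1 - a) + (0:ℝ) * k1) * f) - k2 / ((m - a * f) + (0:ℝ) * k2)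
      = c * (1 - w / m) * (1 + a / (1 - a) * B) + c * ((a - b) / (1 - a)) * (1 - B) := by
    have h0 : 1 - a * (f / m) ≠ 0 := ne_of_gt (by linarith)
    have hBval : B = (1 - a) * f / (m - a * f) := by
      rw [hB]
      rw [div_eq_div_iff h0 hmaf.ne']
      field_simp
    rw [hBval, hk1, hk2]
    simp only [zero_mul, add_zero]
    rw [div_sub_div _ _ (by positivity) hmaf.ne', div_eq_iff (by positivity)]
    field_simp
    ring
  rw [hval] at hD
  -- the original function eventually coincides with the simplified one near 0
  refine hD.congr_of_eventuallyEq ?_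
  have hc1 : ∀ᶠ ε : ℝ in nhds 0, 0 < 1 - ε + ε * c := by
    have hcont : ContinuousAt (fun ε : ℝ => 1 - ε + ε * c) 0 := by fun_prop
    exact hcont.tendsto.eventually_const_lt (by norm_num)
  have hc2 : ∀ᶠ ε : ℝ in nhds 0, 0 < (1 - ε) * m + ε * c * w := by
    have hcont : ContinuousAt (fun ε : ℝ => (1 - ε) * m + ε * c * w) 0 := by fun_prop
    exact hcont.tendsto.eventually_const_lt (by simpa using hm)
  have hc3 : ∀ᶠ ε : ℝ in nhds 0, 0 < (1 - a) + ε * k1 := by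
    have hcont : ContinuousAt (fun ε : ℝ => (1 - a) + ε * k1) 0 := by fun_prop
    exact hcont.tendsto.eventually_const_lt (by simpa using h1a)
  have hc4 : ∀ᶠ ε : ℝ in nhds 0, 0 < (m - a * f) + ε * k2 := by
    have hcont : ContinuousAt (fun ε : ℝ => (m - a * f) + ε * k2) 0 := by fun_prop
    exact hcont.tendsto.eventually_const_lt (by simpa using hmaf)
  filter_upwards [hc1, hc2, hc3, hc4] with ε h1 h2 h3 h4
  have harg : (1 - ((1 - ε) * a + ε * c * b) / (1 - ε + ε * c)) *
      (f / (((1 - ε) * m + ε * c * w) / (1 - ε + ε * c))) /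
      (1 - (((1 - ε) * a + ε * c * b) / (1 - ε + ε * c)) *
        (f / (((1 - ε) * m + ε * c * w) / (1 - ε + ε * c))))
      = (((1 - a) + ε * k1) * f) / ((m - a * f) + ε * k2) := by
    rw [hk1, hk2] at *
    set D := 1 - ε + ε * c
    set P := (1 - ε) * a + ε * c * b with hP
    set M := (1 - ε) * m + ε * c * w with hM
    have hDne : D ≠ 0 := h1.ne'
    have hMne : M ≠ 0 := h2.ne'
    have e2 : f / (M / D) = f * D / M := by field_simp
    have e3 : P / D * (f * D / M) = P * f / M := by field_simp
    have key : (1 - P / D) * (f * D / M) / (1 - P * f / M) = (D - P) * f / (M - P * f) := by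
      rw [sub_div' hDne, sub_div' hMne, div_mul_div_comm, div_div_div_eq]
      rw [show (1 * D - P) * (f * D) * M = ((D - P) * f) * (M * D) by ring,
          show D * M * (1 * M - P * f) = (M - P * f) * (M * D) by ring]
      exact mul_div_mul_right _ _ (by positivity)
    rw [e2, e3, key]
    have eq1 : D - P = (1 - a) + ε * (c - 1 + a - c * b) := by rw [hP]; ring
    have eq2 : M - P * f = (m - a * f) + ε * (c * w - m + (a - c * b) * f) := by
      rw [hM, hP]; ring
    rw [eq1, eq2]
  rw [harg, Real.log_div (by positivity) h4.ne']
end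

section
/- Suppose in addition a = b = 1/2 (prior odds in favor of θ₀ equal to 1 under both the base prior and the contaminating prior). Then the derivative at ε = 0 of ε ↦ log BF_ε equals c·(1 − w/m)·(1 + B); in particular its absolute value is at least |c·(1 − w/m)|, the absolute value of the derivative at ε = 0 of the log relative belief ratio. -/
/-- When `a = b = 1/2` (prior odds in favor of `θ₀` equal to 1 under both the base and
contaminating priors), the derivative at `ε = 0` of the log Bayes factor under linear
contamination equals `c(1 − w/m)(1 + B)`; in particular its absolute value is at least
`|c(1 − w/m)|`, the absolute value of the derivative of the log relative belief ratio. -/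
theorem deriv_log_bayesFactor_linear_contamination_half (f m w c a b : ℝ)
    (hf : 0 < f) (hm : 0 < m) (hw : 0 ≤ w) (hc : 0 < c)
    (ha0 : 0 < a) (ha1 : a < 1) (hb : 0 ≤ b) (hafm : a * (f / m) < 1)
    (ha : a = 1 / 2) (hab : b = 1 / 2)
    (B : ℝ) (hB : B = (1 - a) * (f / m) / (1 - a * (f / m))) :
    HasDerivAt (fun ε : ℝ =>
        Real.log ((1 - ((1 - ε) * a + ε * c * b) / (1 - ε + ε * c)) *
            (f / (((1 - ε) * m + ε * c * w) / (1 - ε + ε * c))) /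
          (1 - (((1 - ε) * a + ε * c * b) / (1 - ε + ε * c)) *
            (f / (((1 - ε) * m + ε * c * w) / (1 - ε + ε * c))))))
      (c * (1 - w / m) * (1 + B)) 0 ∧
    |c * (1 - w / m)| ≤ |c * (1 - w / m) * (1 + B)| := by
  have h2m : f < 2 * m := by
    have h : (1 / 2 : ℝ) * (f / m) < 1 := by rw [← ha]; exact hafm
    have hfm : f / m < 2 := by linarith
    have := (div_lt_iff₀ hm).mp hfm
    linarith
  have hN0 : (0 : ℝ) < 2 * m - f := by linarith
  -- derivative of the simplified function
  have hD : HasDerivAt (fun ε : ℝ => 1 - ε + ε * c) (0 - 1 + 1 * c) 0 :=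
    ((hasDerivAt_const (0 : ℝ) 1).sub (hasDerivAt_id 0)).add ((hasDerivAt_id 0).mul_const c)
  have hM : HasDerivAt (fun ε : ℝ => (1 - ε) * m + ε * c * w) ((0 - 1) * m + 1 * c * w) 0 :=
    (((hasDerivAt_const (0 : ℝ) 1).sub (hasDerivAt_id 0)).mul_const m).add
      (((hasDerivAt_id 0).mul_const c).mul_const w)
  have hN : HasDerivAt (fun ε : ℝ => 2 * ((1 - ε) * m + ε * c * w) - f * (1 - ε + ε * c))
      (2 * ((0 - 1) * m + 1 * c * w) - f * (0 - 1 + 1 * c)) 0 :=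
    (hM.const_mul 2).sub (hD.const_mul f)
  have hDne : (fun ε : ℝ => 1 - ε + ε * c) 0 ≠ 0 := by norm_num
  have hNval : (fun ε : ℝ => 2 * ((1 - ε) * m + ε * c * w) - f * (1 - ε + ε * c)) 0
      = 2 * m - f := by norm_num
  have hNne : (fun ε : ℝ => 2 * ((1 - ε) * m + ε * c * w) - f * (1 - ε + ε * c)) 0 ≠ 0 := by
    rw [hNval]; exact hN0.ne'
  have hF : HasDerivAt
      (fun ε : ℝ => Real.log f + Real.log (1 - ε + ε * c) -
        Real.log (2 * ((1 - ε) * m + ε * c * w) - f * (1 - ε + ε * c)))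
      ((0 - 1 + 1 * c) / ((fun ε : ℝ => 1 - ε + ε * c) 0) -
        (2 * ((0 - 1) * m + 1 * c * w) - f * (0 - 1 + 1 * c)) /
          ((fun ε : ℝ => 2 * ((1 - ε) * m + ε * c * w) - f * (1 - ε + ε * c)) 0)) 0 :=
    ((hD.log hDne).const_add (Real.log f)).sub (hN.log hNne)
  have hderiv : (0 - 1 + 1 * c) / ((fun ε : ℝ => 1 - ε + ε * c) 0) -
      (2 * ((0 - 1) * m + 1 * c * w) - f * (0 - 1 + 1 * c)) /
        ((fun ε : ℝ => 2 * ((1 - ε) * m + ε * c * w) - f * (1 - ε + ε * c)) 0) =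
      c * (1 - w / m) * (1 + B) := by
    rw [hNval, hB, ha]
    have h1 : (1 : ℝ) - 1 / 2 * (f / m) ≠ 0 := by
      rw [ha] at hafm; intro h; nlinarith
    field_simp
    ring
  rw [hderiv] at hF
  -- eventual equality with the original function
  have hDpos : ∀ᶠ ε in nhds (0 : ℝ), 0 < 1 - ε + ε * c := by
    have := hD.continuousAt.eventually_mem (s := Set.Ioi 0) (Ioi_mem_nhds (by norm_num))
    simpa using this
  have hMpos : ∀ᶠ ε in nhds (0 : ℝ), 0 < (1 - ε) * m + ε * c * w := by
    have := hM.continuousAt.eventually_mem (s := Set.Ioi 0) (Ioi_mem_nhds (by simpa using hm))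
    simpa using this
  have hNpos : ∀ᶠ ε in nhds (0 : ℝ),
      0 < 2 * ((1 - ε) * m + ε * c * w) - f * (1 - ε + ε * c) := by
    have := hN.continuousAt.eventually_mem (s := Set.Ioi 0)
      (Ioi_mem_nhds (show (fun ε : ℝ => 2 * ((1 - ε) * m + ε * c * w) - f * (1 - ε + ε * c)) 0 ∈ Set.Ioi 0 by rw [hNval]; exact hN0))
    simpa using this
  have heq : (fun ε : ℝ =>
      Real.log ((1 - ((1 - ε) * a + ε * c * b) / (1 - ε + ε * c)) *
          (f / (((1 - ε) * m + ε * c * w) / (1 - ε + ε * c))) /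
        (1 - (((1 - ε) * a + ε * c * b) / (1 - ε + ε * c)) *
          (f / (((1 - ε) * m + ε * c * w) / (1 - ε + ε * c)))))) =ᶠ[nhds (0 : ℝ)]
      (fun ε : ℝ => Real.log f + Real.log (1 - ε + ε * c) -
        Real.log (2 * ((1 - ε) * m + ε * c * w) - f * (1 - ε + ε * c))) := by
    filter_upwards [hDpos, hMpos, hNpos] with ε hDp hMp hNp
    have hDn : (1 : ℝ) - ε + ε * c ≠ 0 := hDp.ne'
    have hMn : (1 - ε) * m + ε * c * w ≠ 0 := hMp.ne'
    have hNn : 2 * ((1 - ε) * m + ε * c * w) - f * (1 - ε + ε * c) ≠ 0 := hNp.ne'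
    have hp : ((1 - ε) * a + ε * c * b) / (1 - ε + ε * c) = 1 / 2 := by
      rw [ha, hab]; field_simp
    have hfd : f / (((1 - ε) * m + ε * c * w) / (1 - ε + ε * c)) =
        f * (1 - ε + ε * c) / ((1 - ε) * m + ε * c * w) := by
      field_simp
    have hden : (1 : ℝ) - 1 / 2 * (f * (1 - ε + ε * c) / ((1 - ε) * m + ε * c * w)) =
        (2 * ((1 - ε) * m + ε * c * w) - f * (1 - ε + ε * c)) /
          (2 * ((1 - ε) * m + ε * c * w)) := by
      field_simp
    have harg : (1 - ((1 - ε) * a + ε * c * b) / (1 - ε + ε * c)) *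
        (f / (((1 - ε) * m + ε * c * w) / (1 - ε + ε * c))) /
        (1 - (((1 - ε) * a + ε * c * b) / (1 - ε + ε * c)) *
          (f / (((1 - ε) * m + ε * c * w) / (1 - ε + ε * c)))) =
        f * (1 - ε + ε * c) / (2 * ((1 - ε) * m + ε * c * w) - f * (1 - ε + ε * c)) := by
      rw [hp, hfd, hden]
      field_simp
      ring
    rw [harg, Real.log_div (by positivity) hNn, Real.log_mul hf.ne' hDn]
  constructor
  · exact hF.congr_of_eventuallyEq heq
  · have hBpos : 0 ≤ B := by
      rw [hB, ha]
      have h1 : (0 : ℝ) < 1 - 1 / 2 * (f / m) := by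
        rw [ha] at hafm; linarith
      positivity
    have habs : |c * (1 - w / m) * (1 + B)| = |c * (1 - w / m)| * (1 + B) := by
      rw [abs_mul, abs_of_nonneg (by linarith : (0:ℝ) ≤ 1 + B)]
    rw [habs]
    nlinarith [abs_nonneg (c * (1 - w / m))]
end

section
/- The function ε ↦ log( ∫ r(θ)^ε dμ(θ) ) − log( ∫ r(θ)^ε dν(θ) ) is differentiable at ε = 0 with derivative ∫ log r dμ − ∫ log r dν. (Derivative of the log relative belief ratio under geometric contamination of the prior: since RB_ε(θ|x) = RB(θ|x)·(∫ r^ε dμ)/(∫ r^ε dν), the logarithmic derivative at ε = 0 equals E_π(log r) − E_{π(·|x)}(log r), and in particular does not depend on θ.) -/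
open MeasureTheory

lemma aux_hasDerivAt_integral_rpow {Θ : Type*} [MeasurableSpace Θ]
    (μ : Measure Θ) [IsProbabilityMeasure μ]
    (r : Θ → ℝ) (hrmeas : Measurable r) (hrpos : ∀ θ, 0 < r θ)
    (δ : ℝ) (hδ : 0 < δ) (g : Θ → ℝ) (hgμ : Integrable g μ)
    (hdom : ∀ ε : ℝ, |ε| ≤ δ → ∀ θ, |r θ ^ ε * Real.log (r θ)| ≤ g θ) :
    HasDerivAt (fun ε : ℝ => ∫ θ, r θ ^ ε ∂μ) (∫ θ, Real.log (r θ) ∂μ) 0 := by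
  have hm : ∀ ε : ℝ, Measurable (fun θ => r θ ^ ε) := by
    intro ε
    have h : (fun θ => r θ ^ ε) = fun θ => Real.exp (Real.log (r θ) * ε) :=
      funext fun θ => Real.rpow_def_of_pos (hrpos θ) ε
    rw [h]
    exact Real.measurable_exp.comp ((Real.measurable_log.comp hrmeas).mul measurable_const)
  have hF_meas : ∀ᶠ ε in nhds (0:ℝ), AEStronglyMeasurable (fun θ => r θ ^ ε) μ :=
    Filter.Eventually.of_forall fun ε => (hm ε).aestronglyMeasurable
  have hF_int : Integrable (fun θ => r θ ^ (0:ℝ)) μ := by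
    have h : (fun θ => r θ ^ (0:ℝ)) = fun _ => (1:ℝ) := funext fun θ => Real.rpow_zero _
    rw [h]; exact integrable_const 1
  have hF'_meas : AEStronglyMeasurable (fun θ => r θ ^ (0:ℝ) * Real.log (r θ)) μ :=
    ((hm 0).mul (Real.measurable_log.comp hrmeas)).aestronglyMeasurable
  have h_bound : ∀ᵐ θ ∂μ, ∀ ε ∈ Metric.ball (0:ℝ) δ, ‖r θ ^ ε * Real.log (r θ)‖ ≤ g θ :=
    Filter.Eventually.of_forall fun θ ε hε =>
      hdom ε (le_of_lt (by simpa [Real.dist_eq] using hε)) θ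
  have h_diff : ∀ᵐ θ ∂μ, ∀ ε ∈ Metric.ball (0:ℝ) δ,
      HasDerivAt (fun x : ℝ => r θ ^ x) (r θ ^ ε * Real.log (r θ)) ε :=
    Filter.Eventually.of_forall fun θ ε _ =>
      (Real.hasStrictDerivAt_const_rpow (hrpos θ) ε).hasDerivAt
  have key := hasDerivAt_integral_of_dominated_loc_of_deriv_le (μ := μ)
      (F := fun (ε : ℝ) θ => r θ ^ ε)
      (F' := fun (ε : ℝ) θ => r θ ^ ε * Real.log (r θ))
      (x₀ := 0) (bound := g) (Metric.ball_mem_nhds 0 hδ) hF_meas hF_int hF'_meas h_bound hgμ h_diff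
  have h0 : (fun θ => r θ ^ (0 : ℝ) * Real.log (r θ)) = fun θ => Real.log (r θ) := by
    funext θ; rw [Real.rpow_zero, one_mul]
  rw [h0] at key
  exact key.2
/-- Derivative at `ε = 0` of the log relative belief ratio under geometric contamination
of the prior: since `RB_ε = RB·(∫ r^ε dμ)/(∫ r^ε dν)` with `μ` the prior and `ν` the
posterior, the logarithmic derivative at `ε = 0` equals `E_μ(log r) − E_ν(log r)`; in
particular it does not depend on the parameter value. -/
theorem deriv_log_relBelief_geometric_contamination {Θ : Type*} [MeasurableSpace Θ]
    (μ ν : Measure Θ) [IsProbabilityMeasure μ] [IsProbabilityMeasure ν]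
    (r : Θ → ℝ) (hrmeas : Measurable r) (hrpos : ∀ θ, 0 < r θ)
    (δ : ℝ) (hδ : 0 < δ) (g : Θ → ℝ) (hgμ : Integrable g μ) (hgν : Integrable g ν)
    (hdom : ∀ ε : ℝ, |ε| ≤ δ → ∀ θ, |r θ ^ ε * Real.log (r θ)| ≤ g θ) :
    HasDerivAt (fun ε : ℝ => Real.log (∫ θ, r θ ^ ε ∂μ) - Real.log (∫ θ, r θ ^ ε ∂ν))
      ((∫ θ, Real.log (r θ) ∂μ) - ∫ θ, Real.log (r θ) ∂ν) 0 := by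
  have hμ := aux_hasDerivAt_integral_rpow μ r hrmeas hrpos δ hδ g hgμ hdom
  have hν := aux_hasDerivAt_integral_rpow ν r hrmeas hrpos δ hδ g hgν hdom
  have hone : ∀ (m : Measure Θ) [IsProbabilityMeasure m], (∫ θ, r θ ^ (0:ℝ) ∂m) = 1 := by
    intro m _
    simp [Real.rpow_zero]
  have hμlog := hμ.log (by rw [hone μ]; norm_num)
  have hνlog := hν.log (by rw [hone ν]; norm_num)
  have := hμlog.sub hνlog
  rw [hone μ, hone ν] at this
  simp only [div_one] at this
  exact this
end

section
/- Suppose A ⊆ B are events with P(A) > 0 and P(B \ A) > 0, and C is an event with P(C) > 0. Then RB(A|C) > RB(B|C) if and only if RB(A|C) > RB(B \ A|C). -/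
open MeasureTheory

/-- For `A ⊆ B`, `RB(A|C) > RB(B|C)` iff `RB(A|C) > RB(B \ A|C)`. -/
theorem relBelief_subset_gt_iff {Ω : Type*} [MeasurableSpace Ω]
    (P : Measure Ω) [IsProbabilityMeasure P]
    (A B C : Set Ω) (hA : MeasurableSet A) (hB : MeasurableSet B) (hC : MeasurableSet C)
    (hAB : A ⊆ B) (hA0 : 0 < P A) (hBA0 : 0 < P (B \ A)) (hC0 : 0 < P C) :
    relBelief P A C > relBelief P B C ↔ relBelief P A C > relBelief P (B \ A) C := by
  have hfin : ∀ S : Set Ω, P S ≠ ⊤ := fun S => measure_ne_top P S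
  set a := (P (A ∩ C)).toReal with ha_def
  set d := (P ((B \ A) ∩ C)).toReal with hd_def
  set c := (P C).toReal with hc_def
  set pA := (P A).toReal with hpA_def
  set pD := (P (B \ A)).toReal with hpD_def
  have hBsplit : P (B ∩ C) = P (A ∩ C) + P ((B \ A) ∩ C) := by
    rw [← measure_union (by
      exact Set.disjoint_sdiff_right.mono (Set.inter_subset_left) (Set.inter_subset_left)
      ) ((hB.diff hA).inter hC)]
    · congr 1
      rw [← Set.union_inter_distrib_right, Set.union_diff_cancel hAB]
  have hBC : (P (B ∩ C)).toReal = a + d := by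
    rw [hBsplit, ENNReal.toReal_add (hfin _) (hfin _)]
  have hPB : (P B).toReal = pA + pD := by
    have : P B = P A + P (B \ A) := by
      rw [← measure_union (Set.disjoint_sdiff_right) (hB.diff hA), Set.union_diff_cancel hAB]
    rw [this, ENNReal.toReal_add (hfin _) (hfin _)]
  have hc0 : 0 < c := ENNReal.toReal_pos hC0.ne' (hfin _)
  have hpA0 : 0 < pA := ENNReal.toReal_pos hA0.ne' (hfin _)
  have hpD0 : 0 < pD := ENNReal.toReal_pos hBA0.ne' (hfin _)
  have ha0 : 0 ≤ a := ENNReal.toReal_nonneg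
  have hd0 : 0 ≤ d := ENNReal.toReal_nonneg
  simp only [relBelief, condProb, gt_iff_lt, hBC, hPB, ← ha_def, ← hd_def, ← hc_def]
  rw [div_div, div_div, div_div, div_lt_div_iff₀ (by positivity) (by positivity),
    div_lt_div_iff₀ (by positivity) (by positivity)]
  constructor <;> intro h <;> nlinarith [hc0, hpA0, hpD0]
end

section
/- Suppose A ⊆ B are events with P(A) > 0 and P(B \ A) > 0, C is an event with P(C) > 0, and RB(A|C) > 1. Then RB(B|C) < 1 if and only if RB(B \ A|C) < 1 and P(A|B) < (1 − RB(B \ A|C)) / (RB(A|C) − RB(B \ A|C)). (Characterization of when there is evidence in favor of A ⊆ B but evidence against B.) -/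
open MeasureTheory

lemma rb_aux (pA pD pC a d : ℝ) (hpA : 0 < pA) (hpD : 0 < pD) (hpC : 0 < pC)
    (ha : pA * pC < a) :
    (a + d) / pC / (pA + pD) < 1 ↔
      (d / pC / pD < 1 ∧
        pA / (pA + pD) < (1 - d / pC / pD) / (a / pC / pA - d / pC / pD)) := by
  have hpB : 0 < pA + pD := by linarith
  have hr1 : 1 < a / pC / pA := by
    rw [one_lt_div hpA, lt_div_iff₀ hpC]; linarith
  have hrA : pA * (a / pC / pA) = a / pC := by field_simp
  have hrD : pD * (d / pC / pD) = d / pC := by field_simp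
  rw [div_lt_one hpB, div_lt_iff₀ hpC, div_lt_one hpD, div_lt_iff₀ hpC]
  set r := a / pC / pA with hr
  set s := d / pC / pD with hs
  constructor
  · intro h
    have hs1 : s < 1 := by
      rw [hs, div_lt_one hpD, div_lt_iff₀ hpC]; nlinarith
    have hd : d < pD * pC := by nlinarith
    refine ⟨hd, ?_⟩
    have hrs : 0 < r - s := by linarith
    rw [div_lt_div_iff₀ hpB hrs]
    have h1 : a / pC + d / pC < pA + pD := by
      rw [← add_div, div_lt_iff₀ hpC]; linarith
    nlinarith [hrA, hrD]
  · rintro ⟨hd, h2⟩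
    have hs1 : s < 1 := by rw [hs, div_lt_one hpD, div_lt_iff₀ hpC]; linarith
    have hrs : 0 < r - s := by linarith
    rw [div_lt_div_iff₀ hpB hrs] at h2
    have h1 : a / pC + d / pC < pA + pD := by nlinarith [hrA, hrD]
    rw [← add_div, div_lt_iff₀ hpC] at h1
    linarith

/-- Characterization of when there is evidence in favor of `A ⊆ B` but evidence against
`B`: if `RB(A|C) > 1`, then `RB(B|C) < 1` iff `RB(B \ A|C) < 1` and
`P(A|B) < (1 − RB(B \ A|C))/(RB(A|C) − RB(B \ A|C))`. -/
theorem relBelief_evidence_against_superset_iff {Ω : Type*} [MeasurableSpace Ω]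
    (P : Measure Ω) [IsProbabilityMeasure P]
    (A B C : Set Ω) (hA : MeasurableSet A) (hB : MeasurableSet B) (hC : MeasurableSet C)
    (hAB : A ⊆ B) (hA0 : 0 < P A) (hBA0 : 0 < P (B \ A)) (hC0 : 0 < P C)
    (hRBA : relBelief P A C > 1) :
    relBelief P B C < 1 ↔
      (relBelief P (B \ A) C < 1 ∧
        condProb P A B <
          (1 - relBelief P (B \ A) C) / (relBelief P A C - relBelief P (B \ A) C)) := by
  have hpA : 0 < (P A).toReal := ENNReal.toReal_pos hA0.ne' (measure_ne_top P A)
  have hpD : 0 < (P (B \ A)).toReal := ENNReal.toReal_pos hBA0.ne' (measure_ne_top P _)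
  have hpC : 0 < (P C).toReal := ENNReal.toReal_pos hC0.ne' (measure_ne_top P C)
  have hdisj : Disjoint A (B \ A) := disjoint_sdiff_self_right
  have hBsplit : (P B).toReal = (P A).toReal + (P (B \ A)).toReal := by
    rw [← ENNReal.toReal_add (measure_ne_top P A) (measure_ne_top P _),
      ← measure_union hdisj (hB.diff hA), Set.union_diff_cancel hAB]
  have hBCsplit : (P (B ∩ C)).toReal = (P (A ∩ C)).toReal + (P ((B \ A) ∩ C)).toReal := by
    rw [← ENNReal.toReal_add (measure_ne_top P _) (measure_ne_top P _),
      ← measure_union (hdisj.mono Set.inter_subset_left Set.inter_subset_left)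
        ((hB.diff hA).inter hC), ← Set.union_inter_distrib_right,
      Set.union_diff_cancel hAB]
  have hABeq : A ∩ B = A := Set.inter_eq_left.mpr hAB
  simp only [relBelief, condProb, gt_iff_lt] at hRBA ⊢
  rw [one_lt_div hpA, lt_div_iff₀ hpC] at hRBA
  rw [hBCsplit, hBsplit, hABeq]
  exact rb_aux _ _ _ _ _ hpA hpD hpC hRBA
end

section
/- Let μ and ν be probability measures on a measurable space with ν ≪ μ, and let f = dν/dμ be the Radon–Nikodym derivative of ν with respect to μ. Then for every real c ≥ 0, ν({x : f(x) ≤ c}) ≤ c. (Applied with c = RB_Ψ(ψ₀|x), this gives the upper bound of Proposition 12: the strength Str(x) = ν({ψ : RB(ψ|x) ≤ RB(ψ₀|x)}) of the evidence satisfies Str(x) ≤ RB_Ψ(ψ₀|x), so a very small relative belief ratio is always strong evidence against.) -/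
open MeasureTheory

/-- Markov-type bound for the relative belief ratio: if `μ` is the prior, `ν` the
posterior with `ν ≪ μ`, and `f = dν/dμ` is the relative belief ratio, then for every
real `c ≥ 0` the posterior probability that `f ≤ c` is at most `c`. Applied with
`c = RB(ψ₀|x)` this shows the strength of the evidence satisfies
`Str(x) ≤ RB(ψ₀|x)`. -/
theorem measure_rnDeriv_le_le {α : Type*} [MeasurableSpace α]
    (μ ν : Measure α) [IsProbabilityMeasure μ] [IsProbabilityMeasure ν]
    (hνμ : ν ≪ μ) (c : ℝ) (hc : 0 ≤ c) :
    ν {x | ν.rnDeriv μ x ≤ ENNReal.ofReal c} ≤ ENNReal.ofReal c := by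
  set A := {x | ν.rnDeriv μ x ≤ ENNReal.ofReal c} with hAdef
  calc ν A = ∫⁻ x in A, ν.rnDeriv μ x ∂μ := (Measure.setLIntegral_rnDeriv hνμ A).symm
    _ ≤ ∫⁻ _ in A, ENNReal.ofReal c ∂μ := by
        refine setLIntegral_mono_ae (by measurability) ?_
        filter_upwards with x hx using hx
    _ = ENNReal.ofReal c * μ A := by rw [setLIntegral_const]
    _ ≤ ENNReal.ofReal c * 1 := by gcongr; exact prob_le_one
    _ = ENNReal.ofReal c := mul_one _
end

section
/- Fix real numbers n > 0, τ² > 0, α > 0, β > 0 and s² > 0, and define for d ≥ 0 the function F(d) = (1 + n·τ²)^{1/2} · [ ((1 + n·τ²)^{-1}·d + s² + 2β) / (d + s² + 2β) ]^{n/2 + α}. Then F(d) tends to the nonzero limit (1 + n·τ²)^{1/2 − n/2 − α} as d → ∞. (Information inconsistency of the mixture-prior Bayes factor in the normal location-scale model: with d = n(x̄ − μ₀)², the Bayes factor for H₀ : μ = μ₀ does not converge to 0 as the data diverge from μ₀ with s² fixed.) -/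
open Filter

/-- Information inconsistency of the mixture-prior Bayes factor in the normal
location-scale model: with `d = n(x̄ − μ₀)²`, the Bayes factor
`F(d) = (1 + nτ²)^{1/2}·[((1 + nτ²)⁻¹·d + s² + 2β)/(d + s² + 2β)]^{n/2 + α}`
tends to the nonzero limit `(1 + nτ²)^{1/2 − n/2 − α}` as `d → ∞`, rather than to `0`. -/
theorem bayesFactor_information_inconsistency (n τ2 α β s2 : ℝ)
    (hn : 0 < n) (hτ : 0 < τ2) (hα : 0 < α) (hβ : 0 < β) (hs : 0 < s2) :
    Tendsto (fun d : ℝ =>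
        (1 + n * τ2) ^ ((1 : ℝ) / 2) *
          (((1 + n * τ2)⁻¹ * d + s2 + 2 * β) / (d + s2 + 2 * β)) ^ (n / 2 + α))
      atTop (nhds ((1 + n * τ2) ^ ((1 : ℝ) / 2 - n / 2 - α))) ∧
    (1 + n * τ2) ^ ((1 : ℝ) / 2 - n / 2 - α) ≠ 0 := by
  set c : ℝ := 1 + n * τ2 with hc
  have hcpos : 0 < c := by positivity
  have ha : (0:ℝ) < s2 + 2 * β := by positivity
  -- the ratio tends to c⁻¹
  have hratio : Tendsto (fun d : ℝ => (c⁻¹ * d + s2 + 2 * β) / (d + s2 + 2 * β))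
      atTop (nhds c⁻¹) := by
    have h1 : Tendsto (fun d : ℝ => d + (s2 + 2 * β)) atTop atTop :=
      tendsto_atTop_add_const_right _ _ tendsto_id
    have h2 : Tendsto (fun d : ℝ => c⁻¹ + ((s2 + 2 * β) * (1 - c⁻¹)) / (d + (s2 + 2 * β)))
        atTop (nhds (c⁻¹ + 0)) :=
      tendsto_const_nhds.add (Tendsto.div_atTop tendsto_const_nhds h1)
    rw [add_zero] at h2
    refine h2.congr' ?_
    filter_upwards [eventually_gt_atTop 0] with d hd
    have hne : d + (s2 + 2 * β) ≠ 0 := by positivity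
    field_simp
    ring
  have hrpow : Tendsto (fun d : ℝ =>
      ((c⁻¹ * d + s2 + 2 * β) / (d + s2 + 2 * β)) ^ (n / 2 + α))
      atTop (nhds (c⁻¹ ^ (n / 2 + α))) :=
    hratio.rpow_const (Or.inl (by positivity))
  have heq : c ^ ((1:ℝ)/2) * c⁻¹ ^ (n / 2 + α) = c ^ ((1:ℝ)/2 - n/2 - α) := by
    rw [← Real.rpow_neg_one c]
    rw [← Real.rpow_mul hcpos.le, ← Real.rpow_add hcpos]
    ring_nf
  constructor
  · have := hrpow.const_mul (c ^ ((1:ℝ)/2))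
    rwa [heq] at this
  · exact (Real.rpow_pos_of_pos hcpos _).ne'
end
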